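/- In the setting of the previous block-diagonal construction (finite ι, nonempty finite m i, k i, positive definite trace-one τ i, σTr := Matrix.blockDiagonal' (fun i => ((card (k i) : ℝ)/d) • (1 ⊗ₖ τ i)) with d := card (Σ i, (m i × k i)), and E_N(X) := Matrix.blockDiagonal' (fun i => T_i(X_i) ⊗ₖ 1) where T_i(Z)(a,a') := Σ_{b,b'} Z((a,b),(a',b')) · (τ i)(b',b) and X_i is the i-th diagonal block of X), the map E_N is idempotent, E_N(E_N(X)) = E_N(X), and for all matrices X, Y on Σ i, (m i × k i): ⟨E_N(X), Y⟩_{σTr} = ⟨E_N(X), E_N(Y)⟩_{σTr} = ⟨X, E_N(Y)⟩_{σTr}. Hence E_N is the orthogonal projection onto its range with respect to the KMS inner product of σTr. -/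

import Mathlib

open Matrix Kronecker
open scoped ComplexOrder

/-- matrix square root via the continuous functional calculus -/
noncomputable def msqrt {n : Type*} [Fintype n] [DecidableEq n] (A : Matrix n n ℂ) :
    Matrix n n ℂ := cfc Real.sqrt A

/-- the KMS inner product associated with a (positive definite) matrix `σ`:
`⟨X, Y⟩_σ = Tr[σ^{1/2} X* σ^{1/2} Y]`. -/
noncomputable def kmsInner {n : Type*} [Fintype n] [DecidableEq n]
    (σ X Y : Matrix n n ℂ) : ℂ :=
  Matrix.trace (msqrt σ * Xᴴ * msqrt σ * Y)

section Blocks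

variable {ι : Type*} [Fintype ι] [DecidableEq ι]
  {m k : ι → Type*} [∀ i, Fintype (m i)] [∀ i, Fintype (k i)]
  [∀ i, DecidableEq (m i)] [∀ i, DecidableEq (k i)]

/-- the `i`-th diagonal block of a matrix on `Σ i, (m i × k i)` -/
def blockOf (X : Matrix (Σ i, (m i × k i)) (Σ i, (m i × k i)) ℂ) (i : ι) :
    Matrix (m i × k i) (m i × k i) ℂ :=
  Matrix.of fun p q => X ⟨i, p⟩ ⟨i, q⟩

/-- the conditional expectation `E_N` onto the decoherence-free algebra -/
noncomputable def condExp (τ : ∀ i, Matrix (k i) (k i) ℂ)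
    (X : Matrix (Σ i, (m i × k i)) (Σ i, (m i × k i)) ℂ) :
    Matrix (Σ i, (m i × k i)) (Σ i, (m i × k i)) ℂ :=
  Matrix.blockDiagonal' fun i =>
    (Matrix.of fun a a' => ∑ b, ∑ b', blockOf X i (a, b) (a', b') * τ i b' b) ⊗ₖ
      (1 : Matrix (k i) (k i) ℂ)

/-- the reference state `σ_Tr` -/
noncomputable def sigmaTr (τ : ∀ i, Matrix (k i) (k i) ℂ) :
    Matrix (Σ i, (m i × k i)) (Σ i, (m i × k i)) ℂ :=
  Matrix.blockDiagonal' fun i =>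
    ((Fintype.card (k i) : ℝ) / (Fintype.card (Σ i, (m i × k i)) : ℝ)) •
      ((1 : Matrix (m i) (m i) ℂ) ⊗ₖ τ i)

end Blocks

/-!
`E_N` maps onto the matrices `⊕ᵢ Nᵢ ⊗ 1`, which it fixes because `Tr τᵢ = 1`; this gives
idempotence. Such matrices commute with `σTr`, hence with `σTr^{1/2}`, so
`⟨E_N X, Y⟩ = Tr[(E_N X)* σTr Y]`, and `(E_N X)* σTr` has the form `⊕ᵢ Pᵢ ⊗ τᵢ`. Since
`Tr[(P ⊗ τ) Z] = Tr[P T_τ(Z)]`, traces against such matrices do not distinguish `Y` from `E_N Y`.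
The other equality follows from conjugate symmetry of the KMS form.
-/

namespace Matrix

variable {R : Type*} [CommSemiring R] {m k : Type*} [Fintype k]

/-- `T_τ(Z) = Tr₂[Z (1 ⊗ τ)]`, the map `T_i` applied blockwise by `condExp`. -/
def weightedPartialTrace (τ : Matrix k k R) (Z : Matrix (m × k) (m × k) R) : Matrix m m R :=
  of fun a a' => ∑ b, ∑ b', Z (a, b) (a', b') * τ b' b

theorem trace_kronecker_mul_eq_trace_mul_weightedPartialTrace [Fintype m] (P : Matrix m m R)
    (τ : Matrix k k R) (Z : Matrix (m × k) (m × k) R) :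
    trace ((P ⊗ₖ τ) * Z) = trace (P * weightedPartialTrace τ Z) := by
  simp only [trace, diag, mul_apply, weightedPartialTrace, of_apply, kroneckerMap_apply,
    Fintype.sum_prod_type, Finset.mul_sum]
  refine Finset.sum_congr rfl fun a _ => ?_
  rw [Finset.sum_comm]
  refine Finset.sum_congr rfl fun a' _ => ?_
  rw [Finset.sum_comm]
  exact Finset.sum_congr rfl fun b _ => Finset.sum_congr rfl fun b' _ => by ring

theorem weightedPartialTrace_kronecker_one [DecidableEq k] (τ : Matrix k k R)
    (N : Matrix m m R) : weightedPartialTrace τ (N ⊗ₖ (1 : Matrix k k R)) = trace τ • N := by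
  ext a a'
  simp [weightedPartialTrace, one_apply, trace, Finset.mul_sum, mul_comm]

theorem PosSemidef.blockDiagonal' {ι : Type*} [Fintype ι] [DecidableEq ι] {o : ι → Type*}
    [∀ i, Fintype (o i)] [∀ i, DecidableEq (o i)] {M : ∀ i, Matrix (o i) (o i) ℂ}
    (hM : ∀ i, (M i).PosSemidef) : (blockDiagonal' M).PosSemidef := by
  open scoped MatrixOrder in
  choose B hB using fun i => CStarAlgebra.nonneg_iff_eq_star_mul_self.mp (hM i).nonneg
  rw [funext hB]
  simpa [← blockDiagonal'_mul, blockDiagonal'_conjTranspose, star_eq_conjTranspose] using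
    posSemidef_conjTranspose_mul_self (Matrix.blockDiagonal' B)

end Matrix

section KMS

variable {n : Type*} [Fintype n] [DecidableEq n]

theorem msqrt_mul_self {A : Matrix n n ℂ} (hA : A.PosSemidef) : msqrt A * msqrt A = A := by
  open scoped MatrixOrder in
  have : 0 ≤ A := hA.nonneg
  rw [msqrt, ← cfcₙ_eq_cfc, ← CFC.sqrt_eq_real_sqrt A, CFC.sqrt_mul_sqrt_self A]

theorem star_kmsInner (σ A B : Matrix n n ℂ) : star (kmsInner σ A B) = kmsInner σ B A := by
  have hs : (msqrt σ)ᴴ = msqrt σ := (cfc_predicate Real.sqrt σ : IsSelfAdjoint _)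
  rw [kmsInner, kmsInner, ← trace_conjTranspose]
  simp only [conjTranspose_mul, conjTranspose_conjTranspose, hs, ← mul_assoc]
  rw [trace_mul_cycle, ← mul_assoc]

theorem kmsInner_eq_trace_of_commute {σ A : Matrix n n ℂ} (hσ : σ.PosSemidef)
    (h : Commute σ Aᴴ) (B : Matrix n n ℂ) : kmsInner σ A B = trace (Aᴴ * σ * B) := by
  have hs : Commute (msqrt σ) Aᴴ := h.cfc_real Real.sqrt
  rw [kmsInner, hs.eq, mul_assoc Aᴴ, msqrt_mul_self hσ]

end KMS

section Blocks

variable {ι : Type*} [DecidableEq ι] {m k : ι → Type*}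

theorem blockOf_blockDiagonal' (M : ∀ i, Matrix (m i × k i) (m i × k i) ℂ) (i : ι) :
    blockOf (blockDiagonal' M) i = M i := by
  ext p q
  simp [blockOf, blockDiagonal'_apply_eq]

theorem trace_blockDiagonal'_mul [Fintype ι] [∀ i, Fintype (m i)] [∀ i, Fintype (k i)]
    (M : ∀ i, Matrix (m i × k i) (m i × k i) ℂ)
    (Y : Matrix (Σ i, (m i × k i)) (Σ i, (m i × k i)) ℂ) :
    trace (blockDiagonal' M * Y) = ∑ i, trace (M i * blockOf Y i) := by
  simp only [trace, diag, mul_apply, ← Finset.univ_sigma_univ, Finset.sum_sigma]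
  refine Finset.sum_congr rfl fun i _ => Finset.sum_congr rfl fun p _ => ?_
  rw [Fintype.sum_eq_single i fun j hj => Finset.sum_eq_zero fun q _ => by
    rw [blockDiagonal'_apply_ne _ _ _ (Ne.symm hj), zero_mul]]
  simp [blockDiagonal'_apply_eq, blockOf]

variable [∀ i, Fintype (k i)] [∀ i, DecidableEq (k i)] {τ : ∀ i, Matrix (k i) (k i) ℂ}

theorem condExp_eq_blockDiagonal' (X : Matrix (Σ i, (m i × k i)) (Σ i, (m i × k i)) ℂ) :
    condExp τ X = blockDiagonal' fun i =>
      weightedPartialTrace (τ i) (blockOf X i) ⊗ₖ (1 : Matrix (k i) (k i) ℂ) :=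
  rfl

theorem condExp_blockDiagonal'_kronecker_one (hτtr : ∀ i, trace (τ i) = 1)
    (N : ∀ i, Matrix (m i) (m i) ℂ) :
    condExp τ (blockDiagonal' fun i => N i ⊗ₖ (1 : Matrix (k i) (k i) ℂ)) =
      blockDiagonal' fun i => N i ⊗ₖ (1 : Matrix (k i) (k i) ℂ) := by
  simp only [condExp_eq_blockDiagonal', blockOf_blockDiagonal',
    weightedPartialTrace_kronecker_one, hτtr, one_smul]

theorem condExp_condExp (hτtr : ∀ i, trace (τ i) = 1)
    (X : Matrix (Σ i, (m i × k i)) (Σ i, (m i × k i)) ℂ) :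
    condExp τ (condExp τ X) = condExp τ X :=
  condExp_blockDiagonal'_kronecker_one hτtr _

theorem conjTranspose_condExp (X : Matrix (Σ i, (m i × k i)) (Σ i, (m i × k i)) ℂ) :
    (condExp τ X)ᴴ = blockDiagonal' fun i =>
      (weightedPartialTrace (τ i) (blockOf X i))ᴴ ⊗ₖ (1 : Matrix (k i) (k i) ℂ) := by
  simp only [condExp_eq_blockDiagonal', blockDiagonal'_conjTranspose, conjTranspose_kronecker,
    conjTranspose_one]

variable [Fintype ι] [∀ i, Fintype (m i)]

theorem trace_blockDiagonal'_kronecker_mul_condExp (hτtr : ∀ i, trace (τ i) = 1)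
    (P : ∀ i, Matrix (m i) (m i) ℂ) (Y : Matrix (Σ i, (m i × k i)) (Σ i, (m i × k i)) ℂ) :
    trace ((blockDiagonal' fun i => P i ⊗ₖ τ i) * condExp τ Y) =
      trace ((blockDiagonal' fun i => P i ⊗ₖ τ i) * Y) := by
  rw [trace_blockDiagonal'_mul, trace_blockDiagonal'_mul, condExp_eq_blockDiagonal']
  refine Finset.sum_congr rfl fun i _ => ?_
  rw [blockOf_blockDiagonal', ← mul_kronecker_mul, mul_one, trace_kronecker, hτtr, mul_one,
    trace_kronecker_mul_eq_trace_mul_weightedPartialTrace]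

variable [∀ i, DecidableEq (m i)]

theorem commute_sigmaTr_blockDiagonal'_kronecker_one (N : ∀ i, Matrix (m i) (m i) ℂ) :
    Commute (sigmaTr τ) (blockDiagonal' fun i => N i ⊗ₖ (1 : Matrix (k i) (k i) ℂ)) := by
  rw [Commute, SemiconjBy, sigmaTr, ← blockDiagonal'_mul, ← blockDiagonal'_mul]
  congr 1
  ext1 i
  rw [smul_mul_assoc, mul_smul_comm, ← mul_kronecker_mul, ← mul_kronecker_mul, one_mul, mul_one,
    one_mul, mul_one]

theorem blockDiagonal'_kronecker_one_mul_sigmaTr (N : ∀ i, Matrix (m i) (m i) ℂ) :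
    (blockDiagonal' fun i => N i ⊗ₖ (1 : Matrix (k i) (k i) ℂ)) * sigmaTr τ =
      blockDiagonal' fun i =>
        (((Fintype.card (k i) : ℝ) / (Fintype.card (Σ i, (m i × k i)) : ℝ)) • N i) ⊗ₖ τ i := by
  rw [sigmaTr, ← blockDiagonal'_mul]
  congr 1
  ext1 i
  rw [mul_smul_comm, ← mul_kronecker_mul, mul_one, one_mul, smul_kronecker]

theorem sigmaTr_posSemidef (hτ : ∀ i, (τ i).PosSemidef) : (sigmaTr (m := m) τ).PosSemidef :=
  PosSemidef.blockDiagonal' fun i =>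
    (PosSemidef.one.kronecker (hτ i)).smul (by positivity)

theorem kmsInner_sigmaTr_condExp_condExp (hτ : ∀ i, (τ i).PosSemidef)
    (hτtr : ∀ i, trace (τ i) = 1) (X Y : Matrix (Σ i, (m i × k i)) (Σ i, (m i × k i)) ℂ) :
    kmsInner (sigmaTr τ) (condExp τ X) (condExp τ Y) = kmsInner (sigmaTr τ) (condExp τ X) Y := by
  have hcomm : Commute (sigmaTr τ) (condExp τ X)ᴴ := by
    rw [conjTranspose_condExp]
    exact commute_sigmaTr_blockDiagonal'_kronecker_one _
  rw [kmsInner_eq_trace_of_commute (sigmaTr_posSemidef hτ) hcomm,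
    kmsInner_eq_trace_of_commute (sigmaTr_posSemidef hτ) hcomm, conjTranspose_condExp,
    blockDiagonal'_kronecker_one_mul_sigmaTr, trace_blockDiagonal'_kronecker_mul_condExp hτtr]

end Blocks

theorem condExp_idempotent_and_kms_selfadjoint
    {ι : Type*} [Fintype ι] [DecidableEq ι]
    {m k : ι → Type*} [∀ i, Fintype (m i)] [∀ i, Fintype (k i)]
    [∀ i, DecidableEq (m i)] [∀ i, DecidableEq (k i)]
    (τ : ∀ i, Matrix (k i) (k i) ℂ)
    (hτ : ∀ i, (τ i).PosDef) (hτtr : ∀ i, Matrix.trace (τ i) = 1) :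
    (∀ X : Matrix (Σ i, (m i × k i)) (Σ i, (m i × k i)) ℂ,
        condExp τ (condExp τ X) = condExp τ X) ∧
    (∀ X Y : Matrix (Σ i, (m i × k i)) (Σ i, (m i × k i)) ℂ,
        kmsInner (sigmaTr τ) (condExp τ X) Y =
          kmsInner (sigmaTr τ) (condExp τ X) (condExp τ Y) ∧
        kmsInner (sigmaTr τ) (condExp τ X) (condExp τ Y) =
          kmsInner (sigmaTr τ) X (condExp τ Y)) := by
  have hτ' : ∀ i, (τ i).PosSemidef := fun i => (hτ i).posSemidef
  refine ⟨condExp_condExp hτtr, fun X Y =>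
    ⟨(kmsInner_sigmaTr_condExp_condExp hτ' hτtr X Y).symm, ?_⟩⟩
  rw [← star_kmsInner, kmsInner_sigmaTr_condExp_condExp hτ' hτtr, star_kmsInner]
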